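/- Let α₁ be algebraic over k(x) with minimal polynomial P(x,T) of degree Deg(α₁) in T and height H(α₁), and let a₁ ∈ k(x) be a rational function of height H(a₁). Then H(a₁ + α₁) ≤ H(α₁) + Deg(α₁)·H(a₁). -/

import Mathlib

open Polynomial

noncomputable section

variable {k : Type*} [Field k] {σ : Type*}

/-- `P ∈ k[x][T]` is (a) minimal polynomial of the element `α` of a field extension `L`
of `k(x)`: it is nonzero, annihilates `α`, and generates the ideal of annihilators. -/
def IsMinPolyE {L : Type*} [Field L] [Algebra (MvPolynomial σ k) L]
    (P : Polynomial (MvPolynomial σ k)) (α : L) : Prop :=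
  P ≠ 0 ∧ Polynomial.aeval α P = 0 ∧
    ∀ Q : Polynomial (MvPolynomial σ k), Polynomial.aeval α Q = 0 → P ∣ Q

/-- The height of `P ∈ k[x][T]`: the maximum of the total degrees of its coefficients. -/
def heightP (P : Polynomial (MvPolynomial σ k)) : ℕ :=
  (Finset.range (P.natDegree + 1)).sup fun i => (P.coeff i).totalDegree

/-! Write `d = Deg(α₁)` and `m = max (deg b) (deg c)`. Clearing denominators in `P (X - b / c)`
gives `Q₀ = c ^ d P (X - b / c) ∈ k[x][X]`, which vanishes at `a₁ + α₁`. Its primitive part is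
the minimal polynomial of `a₁ + α₁`: over `k(x)` the translation by `b / c` is invertible, so any
`F` vanishing at `a₁ + α₁` becomes divisible by `Q₀` there, and Gauss's lemma descends this to
`k[x][X]`. The `j`-th term of `Q₀ = ∑ⱼ pⱼ c ^ (d - j) (c X - b) ^ j` has coefficients of degree at
most `H(α₁) + (d - j) m + j m`, and passing to the primitive part only divides coefficients. -/

namespace Polynomial

section CommRing

variable {R : Type*} [CommRing R]

theorem scaleRoots_comp_C_mul_X (p : R[X]) (c : R) :
    (p.scaleRoots c).comp (C c * X) = C c ^ p.natDegree * p := by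
  rw [comp, scaleRoots_eval₂_mul, eval₂_C_X]

/-- `fracShift s c F` is `c ^ natDegree F * F (X - s / c)` with the denominators cleared. -/
def fracShift (s c : R) (F : R[X]) : R[X] :=
  (F.scaleRoots c).comp (C c * X - C s)

theorem aeval_fracShift {A : Type*} [CommRing A] [Algebra R A] {s c : R} {x y : A}
    (hxy : algebraMap R A c * y - algebraMap R A s = algebraMap R A c * x) (F : R[X]) :
    aeval y (fracShift s c F) = algebraMap R A c ^ F.natDegree * aeval x F := by
  rw [fracShift, aeval_comp, map_sub, map_mul, aeval_C, aeval_C, aeval_X, hxy, aeval_def,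
    scaleRoots_eval₂_mul, ← aeval_def]

theorem map_fracShift {K : Type*} [Field K] {f : R →+* K} (hf : Function.Injective f)
    {c : R} (hc : f c ≠ 0) (s : R) (F : R[X]) :
    (fracShift s c F).map f = C (f c ^ F.natDegree) * taylor (-(f s / f c)) (F.map f) := by
  rcases eq_or_ne F 0 with rfl | hF
  · simp [fracShift]
  have hlin : C (f c) * X - C (f s) = (C (f c) * X).comp (X + C (-(f s / f c))) := by
    rw [mul_comp, C_comp, X_comp, mul_add, ← C_mul, mul_neg, mul_div_cancel₀ _ hc, C_neg,
      sub_eq_add_neg]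
  have hlc : f F.leadingCoeff ≠ 0 := (map_ne_zero_iff f hf).2 (leadingCoeff_ne_zero.2 hF)
  rw [fracShift, map_comp, map_scaleRoots _ _ _ hlc]
  simp only [Polynomial.map_sub, Polynomial.map_mul, map_C, map_X]
  rw [hlin, ← comp_assoc, scaleRoots_comp_C_mul_X, mul_comp, pow_comp, C_comp, taylor_apply,
    natDegree_map_eq_of_injective hf, C_pow]

end CommRing

section IsDomain

variable {R : Type*} [CommRing R] [IsDomain R]

theorem fracShift_ne_zero {c : R} (hc : c ≠ 0) (s : R) {F : R[X]} (hF : F ≠ 0) :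
    fracShift s c F ≠ 0 := by
  rw [fracShift, Ne, comp_eq_zero_iff, not_or]
  refine ⟨scaleRoots_ne_zero hF c, fun ⟨_, hconst⟩ => hc ?_⟩
  simpa using congrArg (coeff · 1) hconst

theorem primPart_fracShift_dvd [NormalizedGCDMonoid R] {c : R} (hc : c ≠ 0) {s : R}
    {P F : R[X]} (h : P ∣ fracShift (-s) c F) : (fracShift s c P).primPart ∣ F := by
  set f := algebraMap R (FractionRing R)
  have hf : Function.Injective f := IsFractionRing.injective R (FractionRing R)
  have hfc : f c ≠ 0 := (map_ne_zero_iff f hf).2 hc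
  have hP : P.map f ∣ taylor (f s / f c) (F.map f) := by
    have := map_dvd f h
    rwa [map_fracShift hf hfc, map_neg, neg_div, neg_neg, dvd_C_mul (pow_ne_zero _ hfc)] at this
  refine (isPrimitive_primPart _).dvd_of_fraction_map_dvd_fraction_map
    ((map_dvd f (primPart_dvd _)).trans ?_)
  rw [map_fracShift hf hfc, C_mul_dvd (pow_ne_zero _ hfc)]
  obtain ⟨H, hH⟩ := hP
  exact ⟨taylor (-(f s / f c)) H, by
    rw [← taylor_mul, ← hH, taylor_taylor, neg_add_cancel, taylor_zero]⟩

end IsDomain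

end Polynomial

theorem totalDegree_coeff_le_heightP (P : Polynomial (MvPolynomial σ k)) (i : ℕ) :
    (P.coeff i).totalDegree ≤ heightP P := by
  rcases le_or_gt i P.natDegree with hi | hi
  · exact Finset.le_sup (f := fun i => (P.coeff i).totalDegree) (by simpa [Nat.lt_succ_iff])
  · simp [coeff_eq_zero_of_natDegree_lt hi]

theorem heightP_le_iff {P : Polynomial (MvPolynomial σ k)} {B : ℕ} :
    heightP P ≤ B ↔ ∀ i, (P.coeff i).totalDegree ≤ B :=
  ⟨fun h i => (totalDegree_coeff_le_heightP P i).trans h,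
    fun h => Finset.sup_le fun i _ => h i⟩

theorem heightP_C (a : MvPolynomial σ k) : heightP (C a) = a.totalDegree := by
  simp [heightP]

theorem heightP_one : heightP (1 : Polynomial (MvPolynomial σ k)) = 0 := by
  rw [← C_1, heightP_C, MvPolynomial.totalDegree_one]

theorem heightP_sum_le {ι : Type*} (s : Finset ι) (F : ι → Polynomial (MvPolynomial σ k))
    {B : ℕ} (h : ∀ i ∈ s, heightP (F i) ≤ B) : heightP (∑ i ∈ s, F i) ≤ B := by
  refine heightP_le_iff.2 fun n => ?_
  rw [finsetSum_coeff]
  exact (MvPolynomial.totalDegree_finsetSum _ _).trans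
    (Finset.sup_le fun i hi => heightP_le_iff.1 (h i hi) n)

theorem heightP_mul_le (P Q : Polynomial (MvPolynomial σ k)) :
    heightP (P * Q) ≤ heightP P + heightP Q := by
  refine heightP_le_iff.2 fun n => ?_
  rw [coeff_mul]
  exact (MvPolynomial.totalDegree_finsetSum _ _).trans <| Finset.sup_le fun x _ =>
    (MvPolynomial.totalDegree_mul _ _).trans
      (add_le_add (totalDegree_coeff_le_heightP P x.1) (totalDegree_coeff_le_heightP Q x.2))

theorem heightP_pow_le (P : Polynomial (MvPolynomial σ k)) (j : ℕ) :
    heightP (P ^ j) ≤ j * heightP P := by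
  induction j with
  | zero => rw [pow_zero, heightP_one, zero_mul]
  | succ j ih =>
    rw [pow_succ, add_one_mul]
    exact (heightP_mul_le _ _).trans (by omega)

theorem heightP_C_mul_X_sub_C_le (s c : MvPolynomial σ k) :
    heightP (C c * X - C s) ≤ max s.totalDegree c.totalDegree := by
  refine heightP_le_iff.2 fun i => ?_
  rcases i with _ | _ | i <;> simp [coeff_X, coeff_C]

theorem heightP_fracShift_le (s c : MvPolynomial σ k) (F : Polynomial (MvPolynomial σ k)) :
    heightP (fracShift s c F) ≤
      heightP F + F.natDegree * max s.totalDegree c.totalDegree := by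
  set m := max s.totalDegree c.totalDegree
  rw [fracShift, comp, eval₂_eq_sum_range, natDegree_scaleRoots]
  refine heightP_sum_le _ _ fun j hj => ?_
  have hj : j ≤ F.natDegree := Nat.lt_succ_iff.mp (Finset.mem_range.mp hj)
  have hcoeff : ((F.scaleRoots c).coeff j).totalDegree ≤ heightP F + (F.natDegree - j) * m := by
    rw [coeff_scaleRoots]
    exact (MvPolynomial.totalDegree_mul _ _).trans (add_le_add
      (totalDegree_coeff_le_heightP F j)
      ((MvPolynomial.totalDegree_pow _ _).trans (Nat.mul_le_mul_left _ (le_max_right _ _))))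
  calc heightP (C ((F.scaleRoots c).coeff j) * (C c * X - C s) ^ j)
      ≤ heightP F + (F.natDegree - j) * m + j * m := by
        refine (heightP_mul_le _ _).trans (add_le_add ((heightP_C _).trans_le hcoeff) ?_)
        exact (heightP_pow_le _ _).trans (Nat.mul_le_mul_left _ (heightP_C_mul_X_sub_C_le s c))
    _ = heightP F + F.natDegree * m := by
        rw [add_assoc, ← add_mul, Nat.sub_add_cancel hj]

theorem heightP_primPart_le [NormalizedGCDMonoid (MvPolynomial σ k)]
    (P : Polynomial (MvPolynomial σ k)) : heightP P.primPart ≤ heightP P := by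
  rcases eq_or_ne P 0 with rfl | hP
  · rw [primPart_zero, heightP_one]; exact Nat.zero_le _
  refine heightP_le_iff.2 fun i => ?_
  have hcoeff : P.coeff i = P.content * P.primPart.coeff i := by
    conv_lhs => rw [P.eq_C_content_mul_primPart, coeff_C_mul]
  rcases eq_or_ne (P.primPart.coeff i) 0 with h0 | h0
  · simp [h0]
  refine (MvPolynomial.totalDegree_le_of_dvd_of_isDomain ⟨P.content, ?_⟩ ?_).trans
    (totalDegree_coeff_le_heightP P i)
  · rw [hcoeff, mul_comm]
  · rw [hcoeff]
    exact mul_ne_zero (mt content_eq_zero_iff.1 hP) h0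

theorem IsMinPolyE.primPart_fracShift [NormalizedGCDMonoid (MvPolynomial σ k)] {L : Type*}
    [Field L] [Algebra (MvPolynomial σ k) L]
    (hinj : Function.Injective (algebraMap (MvPolynomial σ k) L))
    {P : Polynomial (MvPolynomial σ k)} {α : L} (hP : IsMinPolyE P α)
    {a : L} {b c : MvPolynomial σ k} (hc : c ≠ 0)
    (ha : a * algebraMap (MvPolynomial σ k) L c = algebraMap (MvPolynomial σ k) L b) :
    IsMinPolyE (fracShift b c P).primPart (a + α) := by
  obtain ⟨hP0, hPα, hPdvd⟩ := hP
  set f := algebraMap (MvPolynomial σ k) L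
  have : Module.IsTorsionFree (MvPolynomial σ k) L :=
    Module.isTorsionFree_iff_algebraMap_injective.2 hinj
  have hshift : f c * (a + α) - f b = f c * α := by linear_combination ha
  have hshift_back : f c * α - f (-b) = f c * (a + α) := by
    rw [map_neg]; linear_combination -ha
  refine ⟨primPart_ne_zero _, aeval_primPart_eq_zero (fracShift_ne_zero hc b hP0) ?_,
    fun F hF => primPart_fracShift_dvd hc (hPdvd _ ?_)⟩
  · rw [aeval_fracShift hshift, hPα, mul_zero]
  · rw [aeval_fracShift hshift_back, hF, mul_zero]

theorem height_add_rational_le_general {n : ℕ} {L : Type*} [Field L]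
    [Algebra (MvPolynomial (Fin n) k) L]
    (hinj : Function.Injective (algebraMap (MvPolynomial (Fin n) k) L))
    (α₁ : L) (P : Polynomial (MvPolynomial (Fin n) k)) (hP : IsMinPolyE P α₁)
    (a₁ : L) (b c : MvPolynomial (Fin n) k) (hc : c ≠ 0)
    (ha₁ : a₁ * algebraMap (MvPolynomial (Fin n) k) L c =
      algebraMap (MvPolynomial (Fin n) k) L b) :
    ∃ Q : Polynomial (MvPolynomial (Fin n) k), IsMinPolyE Q (a₁ + α₁) ∧
      heightP Q ≤ heightP P + P.natDegree * max b.totalDegree c.totalDegree := by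
  let _ := UniqueFactorizationMonoid.strongNormalizationMonoid (α := MvPolynomial (Fin n) k)
  let _ := UniqueFactorizationMonoid.toNormalizedGCDMonoid (MvPolynomial (Fin n) k)
  exact ⟨(fracShift b c P).primPart, hP.primPart_fracShift hinj hc ha₁,
    (heightP_primPart_le _).trans (heightP_fracShift_le b c P)⟩

/-- If `α₁` is algebraic over `k(x)` with minimal polynomial `P`, and
`a₁ = b/c ∈ k(x)` is a rational function written in lowest terms, then
`H(a₁ + α₁) ≤ H(α₁) + Deg(α₁) · H(a₁)`, where `H(a₁) = max (deg b) (deg c)`. -/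
theorem height_add_rational_le {n : ℕ} {L : Type*} [Field L]
    [Algebra (MvPolynomial (Fin n) k) L]
    (hinj : Function.Injective (algebraMap (MvPolynomial (Fin n) k) L))
    (α₁ : L) (P : Polynomial (MvPolynomial (Fin n) k)) (hP : IsMinPolyE P α₁)
    (a₁ : L) (b c : MvPolynomial (Fin n) k) (hc : c ≠ 0) (hbc : IsRelPrime b c)
    (ha₁ : a₁ * algebraMap (MvPolynomial (Fin n) k) L c =
      algebraMap (MvPolynomial (Fin n) k) L b) :
    ∃ Q : Polynomial (MvPolynomial (Fin n) k), IsMinPolyE Q (a₁ + α₁) ∧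
      heightP Q ≤ heightP P + P.natDegree * max b.totalDegree c.totalDegree :=
  height_add_rational_le_general hinj α₁ P hP a₁ b c hc ha₁
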